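/- arXiv:2012.05639 — 2 statements merged into one kernel-verified Lean document; each statement's English description precedes it below -/
import Mathlib

section
/- Let n ≥ 1, let κ ∈ {1, −1}, let a ∈ Mat_n, and set d = −κ·a. If y : ℂ → Mat_n is three times differentiable and satisfies the matrix Painlevé II equation P₂¹: y''(z) = κ[y(z), y'(z)] + 2 y(z)³ + z·y(z) + a for all z, then y satisfies the third-order reduced matrix mKdV equation: y'''(z) = 3 y(z)² y'(z) + 3 y'(z) y(z)² + y(z) + z·y'(z) + [d, y(z)] for all z. -/
attribute [local instance] Matrix.normedAddCommGroup Matrix.normedSpace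

/-!
Differentiate P₂¹ once and substitute P₂¹ for the `y''` that appears: since `y` commutes with
`y³` and with `z y`, only `κ [y, κ[y, y'] + a] = κ² [y, [y, y']] + [d, y]` survives from the
commutator term, and for `κ² = 1` the double commutator `y²y' - 2yy'y + y'y²` combines with
`(2y³)' = 2(y'y² + yy'y + y²y')` into `3y²y' + 3y'y²`.
-/

section Algebra

variable {R A : Type*} [CommRing R] [Ring A] [Algebra R A]

def painleveIIRhs (κ : R) (a : A) (z : R) (Y P : A) : A :=
  κ • (Y * P - P * Y) + (2 : R) • Y ^ 3 + z • Y + a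

def mkdvReductionRhs (d : A) (z : R) (Y P : A) : A :=
  3 * (Y ^ 2 * P) + 3 * (P * Y ^ 2) + Y + z • P + (d * Y - Y * d)

theorem painleveII_differentiated_eq_mkdvReductionRhs {κ : R} (hκ : κ * κ = 1)
    (a : A) (z : R) (Y P : A) :
    κ • (Y * painleveIIRhs κ a z Y P - painleveIIRhs κ a z Y P * Y)
        + (2 : R) • (P * Y ^ 2 + Y * P * Y + Y ^ 2 * P) + Y + z • P
      = mkdvReductionRhs (-(κ • a)) z Y P := by
  simp only [painleveIIRhs, mkdvReductionRhs, ← Nat.ofNat_nsmul_eq_mul, smul_sub, smul_add,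
    mul_add, add_mul, mul_sub, sub_mul, mul_smul_comm, smul_mul_assoc, smul_smul, mul_assoc,
    neg_mul, mul_neg, pow_succ, pow_zero, one_mul]
  -- the two sides differ by `(κ * κ - 1) • [Y, [Y, P]]`
  linear_combination (norm := module) hκ • (Y * (Y * P) - 2 • (Y * (P * Y)) + P * (Y * Y))

end Algebra

section Calculus

variable {𝕜 : Type*} [NontriviallyNormedField 𝕜] [CompleteSpace 𝕜]

theorem HasDerivAt.matrix_mul {l m n : Type*} [Fintype l] [Fintype m] [Fintype n]
    {f : 𝕜 → Matrix l m 𝕜} {g : 𝕜 → Matrix m n 𝕜} {f' : Matrix l m 𝕜} {g' : Matrix m n 𝕜}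
    {z : 𝕜} (hf : HasDerivAt f f' z) (hg : HasDerivAt g g' z) :
    HasDerivAt (fun w => f w * g w) (f' * g z + f z * g') z := by
  rw [add_comm]
  exact (mulLinearMap 𝕜).toContinuousBilinearMap.hasDerivAt_of_bilinear
    (fun _ => hf) (fun _ => hg)

variable {m : Type*} [Fintype m] [DecidableEq m]

theorem HasDerivAt.matrix_pow_three {f : 𝕜 → Matrix m m 𝕜} {f' : Matrix m m 𝕜} {z : 𝕜}
    (hf : HasDerivAt f f' z) :
    HasDerivAt (fun w => f w ^ 3) (f' * f z ^ 2 + f z * f' * f z + f z ^ 2 * f') z := by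
  simp only [pow_succ, pow_zero, one_mul]
  exact ((hf.matrix_mul hf).matrix_mul hf).congr_deriv
    (by simp only [add_mul, mul_assoc, add_assoc])

theorem hasDerivAt_painleveIIRhs {y u : 𝕜 → Matrix m m 𝕜} {Q : Matrix m m 𝕜} {z : 𝕜}
    (hy : HasDerivAt y (u z) z) (hu : HasDerivAt u Q z) (κ : 𝕜) (a : Matrix m m 𝕜) :
    HasDerivAt (fun w => painleveIIRhs κ a w (y w) (u w))
      (κ • (y z * Q - Q * y z) + (2 : 𝕜) • (u z * y z ^ 2 + y z * u z * y z + y z ^ 2 * u z)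
        + y z + z • u z) z := by
  have hcomm : HasDerivAt (fun w => y w * u w - u w * y w) (y z * Q - Q * y z) z :=
    ((hy.matrix_mul hu).sub (hu.matrix_mul hy)).congr_deriv (by abel)
  have hlin : HasDerivAt (fun w => w • y w) (y z + z • u z) z :=
    ((hasDerivAt_id z).smul hy).congr_deriv (by rw [id, one_smul, add_comm])
  refine ((((hcomm.const_smul κ).add (hy.matrix_pow_three.const_smul (2 : 𝕜))).add hlin).add
    (hasDerivAt_const z a)).congr_deriv ?_
  simp only [add_zero, add_assoc]

end Calculus

theorem matrixP21_satisfies_mkdv_reduction_general (n : ℕ)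
    (κ : ℂ) (hκ : κ = 1 ∨ κ = -1)
    (a : Matrix (Fin n) (Fin n) ℂ) (d : Matrix (Fin n) (Fin n) ℂ)
    (hd : d = -(κ • a))
    (y : ℂ → Matrix (Fin n) (Fin n) ℂ)
    (hy : Differentiable ℂ y) (hy' : Differentiable ℂ (deriv y))
    (heq : ∀ z : ℂ, deriv (deriv y) z =
      κ • (y z * deriv y z - deriv y z * y z) + (2 : ℂ) • (y z) ^ 3 + z • y z + a) :
    ∀ z : ℂ, deriv (deriv (deriv y)) z =
      3 * ((y z) ^ 2 * deriv y z) + 3 * (deriv y z * (y z) ^ 2) + y z + z • deriv y z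
        + (d * y z - y z * d) := by
  intro z
  subst hd
  have hκ_sq : κ * κ = 1 := by rcases hκ with rfl | rfl <;> norm_num
  have hy₂ : HasDerivAt (deriv y) (painleveIIRhs κ a z (y z) (deriv y z)) z :=
    (hy' z).hasDerivAt.congr_deriv (heq z)
  have hy₃ := (hasDerivAt_painleveIIRhs (hy z).hasDerivAt hy₂ κ a).congr_of_eventuallyEq
    (.of_forall heq)
  exact hy₃.deriv.trans (painleveII_differentiated_eq_mkdvReductionRhs hκ_sq a z (y z) _)

/-- every solution of the matrix Painlevé II equation P₂¹
`y'' = κ[y,y'] + 2y³ + z y + a` (with `κ = ±1`) satisfies the self-similar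
reduction of the matrix mKdV equation,
`y''' = 3y²y' + 3y'y² + y + z y' + [d, y]` with `d = −κ a`. -/
theorem matrixP21_satisfies_mkdv_reduction (n : ℕ) (hn : 1 ≤ n)
    (κ : ℂ) (hκ : κ = 1 ∨ κ = -1)
    (a : Matrix (Fin n) (Fin n) ℂ) (d : Matrix (Fin n) (Fin n) ℂ)
    (hd : d = -(κ • a))
    (y : ℂ → Matrix (Fin n) (Fin n) ℂ)
    (hy : Differentiable ℂ y) (hy' : Differentiable ℂ (deriv y))
    (hy'' : Differentiable ℂ (deriv (deriv y)))
    (heq : ∀ z : ℂ, deriv (deriv y) z =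
      κ • (y z * deriv y z - deriv y z * y z) + (2 : ℂ) • (y z) ^ 3 + z • y z + a) :
    ∀ z : ℂ, deriv (deriv (deriv y)) z =
      3 * ((y z) ^ 2 * deriv y z) + 3 * (deriv y z * (y z) ^ 2) + y z + z • deriv y z
        + (d * y z - y z * d) :=
  matrixP21_satisfies_mkdv_reduction_general n κ hκ a d hd y hy hy' heq
end

section
/- Let n ≥ 1, let c ∈ Mat_n, and let α ∈ ℂ. Suppose y, h : ℂ → Mat_n are differentiable (with y twice differentiable), y(z) is invertible for every z, and the system −y'(z) = y(z)² + 2 h(z) y(z) + 2z·y(z) + 2c and h'(z) = h(z)² + y(z) h(z) + h(z) y(z) + 2z·h(z) + (α − 1)·I holds for all z. Then y satisfies the matrix Painlevé IV equation: y''(z) = (1/2)(y'(z) + 2c)·y(z)⁻¹·(y'(z) − 2c) + (1/2)[y(z), y'(z)] + (3/2) y(z)³ + 4z·y(z)² + 2(z² − α)·y(z) + c·y(z) + y(z)·c for all z. -/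
attribute [local instance] Matrix.normedAddCommGroup Matrix.normedSpace

/-!
Differentiating the first equation expresses `y''` through `y, y', h, h'`; the second equation
removes `h'`. Every remaining occurrence of `h` comes as `h y` or as `h = (h y) y⁻¹`, and the
first equation gives `h y = -½ (y' + y² + 2zy + 2c)`, so `h` disappears and what is left is a
noncommutative polynomial identity in `y, y⁻¹, y', c`.
-/

theorem HasDerivAt.matrix_mul_s19 {𝕜 l m n : Type*} [NontriviallyNormedField 𝕜] [CompleteSpace 𝕜]
    [Fintype l] [Fintype m] [Fintype n] {A : 𝕜 → Matrix l m 𝕜} {B : 𝕜 → Matrix m n 𝕜}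
    {A' : Matrix l m 𝕜} {B' : Matrix m n 𝕜} {z : 𝕜}
    (hA : HasDerivAt A A' z) (hB : HasDerivAt B B' z) :
    HasDerivAt (fun w => A w * B w) (A' * B z + A z * B') z := by
  rw [add_comm]
  exact (mulLinearMap 𝕜).toContinuousBilinearMap.hasDerivAt_of_bilinear (fun _ => hA) (fun _ => hB)

theorem neg_deriv_deriv_eq_of_neg_deriv_eq {𝕜 m : Type*} [NontriviallyNormedField 𝕜]
    [CompleteSpace 𝕜] [Fintype m] [DecidableEq m] {y h : 𝕜 → Matrix m m 𝕜} {c : Matrix m m 𝕜}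
    (hy : Differentiable 𝕜 y) (hh : Differentiable 𝕜 h)
    (hyeq : ∀ z, -(deriv y z) = (y z)^2 + 2 * (h z * y z) + (2 * z) • y z + 2 * c) (z : 𝕜) :
    -deriv (deriv y) z = (deriv y z * y z + y z * deriv y z)
      + 2 * (deriv h z * y z + h z * deriv y z) + ((2 * z) • deriv y z + (2 : 𝕜) • y z) := by
  have hyz := (hy z).hasDerivAt
  have hsq : HasDerivAt (fun w => (y w)^2) (deriv y z * y z + y z * deriv y z) z := by
    simp only [pow_two]
    exact hyz.matrix_mul_s19 hyz
  have hhy := (hasDerivAt_const z (2 : Matrix m m 𝕜)).matrix_mul_s19 ((hh z).hasDerivAt.matrix_mul_s19 hyz)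
  have hzy := ((hasDerivAt_id z).const_mul (2 : 𝕜)).smul hyz
  have hy' : HasDerivAt (deriv y) (-((deriv y z * y z + y z * deriv y z)
      + (0 * (h z * y z) + 2 * (deriv h z * y z + h z * deriv y z))
      + ((2 * z) • deriv y z + ((2 : 𝕜) * 1) • y z) + 0)) z :=
    (((hsq.add hhy).add hzy).add (hasDerivAt_const z (2 * c))).neg.congr_of_eventuallyEq
      (.of_forall fun w => by simp [← hyeq w])
  rw [show deriv (deriv y) z = _ from hy'.deriv]
  simp

theorem painleveIV_of_system {𝕜 A : Type*} [Field 𝕜] [CharZero 𝕜] [Ring A] [Algebra 𝕜 A]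
    {y y' y'' h h' yinv c : A} {z α : 𝕜} (hright : y * yinv = 1) (hleft : yinv * y = 1)
    (hy : -y' = y^2 + 2 * (h * y) + (2 * z) • y + 2 * c)
    (hy' : -y'' = (y' * y + y * y') + 2 * (h' * y + h * y') + ((2 * z) • y' + (2 : 𝕜) • y))
    (hh : h' = h^2 + y * h + h * y + (2 * z) • h + (α - 1) • (1 : A)) :
    y'' = (1/2 : 𝕜) • ((y' + 2 * c) * yinv * (y' - 2 * c))
        + (1/2 : 𝕜) • (y * y' - y' * y)
        + (3/2 : 𝕜) • y^3 + (4 * z) • y^2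
        + (2 * (z^2 - α)) • y + c * y + y * c := by
  set u := h * y with hu
  have hh_eq : h = u * yinv := by rw [hu, mul_assoc, hright, mul_one]
  have hu_eq : u = (1/2 : 𝕜) • (-y' - y^2 - (2 * z) • y - 2 * c) := by
    rw [hy, two_mul]; module
  have hh'y : h' * y = u * yinv * u + y * u + u * y + (2 * z) • u + (α - 1) • y := by
    rw [hh, hh_eq]
    simp only [pow_two, add_mul, mul_assoc, hleft, mul_one, smul_mul_assoc, one_mul]
  have hhy' : h * y' = u * yinv * y' := by rw [hh_eq]
  have cancel : ∀ x : A, yinv * (y * x) = x := fun x => by rw [← mul_assoc, hleft, one_mul]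
  rw [← neg_neg y'', hy', hh'y, hhy', hu_eq]
  simp only [pow_succ, pow_zero, one_mul, mul_add, add_mul, mul_sub, sub_mul, neg_mul, mul_neg,
    smul_mul_assoc, mul_smul_comm, mul_assoc, mul_one, smul_add, smul_sub, smul_neg, smul_smul,
    two_mul, hright, hleft, cancel]
  module

theorem matrixP4_from_system_general (n : ℕ)
    (c : Matrix (Fin n) (Fin n) ℂ) (α : ℂ)
    (y h : ℂ → Matrix (Fin n) (Fin n) ℂ)
    (hy : Differentiable ℂ y)
    (hh : Differentiable ℂ h)
    (hinv : ∀ z : ℂ, IsUnit (y z))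
    (hyeq : ∀ z : ℂ, -(deriv y z) =
      (y z)^2 + 2 * (h z * y z) + (2 * z) • y z + 2 * c)
    (hheq : ∀ z : ℂ, deriv h z =
      (h z)^2 + y z * h z + h z * y z + (2 * z) • h z
        + (α - 1) • (1 : Matrix (Fin n) (Fin n) ℂ)) :
    ∀ z : ℂ, deriv (deriv y) z =
      (1/2 : ℂ) • ((deriv y z + 2 * c) * (y z)⁻¹ * (deriv y z - 2 * c))
        + (1/2 : ℂ) • (y z * deriv y z - deriv y z * y z)
        + (3/2 : ℂ) • (y z)^3 + (4 * z) • (y z)^2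
        + (2 * (z^2 - α)) • y z + c * y z + y z * c := by
  intro z
  have hdet : IsUnit (y z).det := (Matrix.isUnit_iff_isUnit_det (y z)).mp (hinv z)
  exact painleveIV_of_system (Matrix.mul_nonsing_inv _ hdet) (Matrix.nonsing_inv_mul _ hdet)
    (hyeq z) (neg_deriv_deriv_eq_of_neg_deriv_eq hy hh hyeq z) (hheq z)

/-- eliminating `h` from the system
`−y' = y² + 2hy + 2zy + 2c`, `h' = h² + yh + hy + 2zh + (α−1)I`
yields the matrix Painlevé IV equation
`y'' = ½(y'+2c) y⁻¹ (y'−2c) + ½[y,y'] + 3/2 y³ + 4zy² + 2(z²−α)y + cy + yc`. -/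
theorem matrixP4_from_system (n : ℕ) (hn : 1 ≤ n)
    (c : Matrix (Fin n) (Fin n) ℂ) (α : ℂ)
    (y h : ℂ → Matrix (Fin n) (Fin n) ℂ)
    (hy : Differentiable ℂ y) (hy' : Differentiable ℂ (deriv y))
    (hh : Differentiable ℂ h)
    (hinv : ∀ z : ℂ, IsUnit (y z))
    (hyeq : ∀ z : ℂ, -(deriv y z) =
      (y z)^2 + 2 * (h z * y z) + (2 * z) • y z + 2 * c)
    (hheq : ∀ z : ℂ, deriv h z =
      (h z)^2 + y z * h z + h z * y z + (2 * z) • h z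
        + (α - 1) • (1 : Matrix (Fin n) (Fin n) ℂ)) :
    ∀ z : ℂ, deriv (deriv y) z =
      (1/2 : ℂ) • ((deriv y z + 2 * c) * (y z)⁻¹ * (deriv y z - 2 * c))
        + (1/2 : ℂ) • (y z * deriv y z - deriv y z * y z)
        + (3/2 : ℂ) • (y z)^3 + (4 * z) • (y z)^2
        + (2 * (z^2 - α)) • y z + c * y z + y z * c :=
  matrixP4_from_system_general n c α y h hy hh hinv hyeq hheq
end
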